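/- arXiv:1907.05055 — 2 statements merged into one kernel-verified Lean document; each statement's English description precedes it below -/
import Mathlib

section
/- Let L be a semivalid representation of a connected graph G and β a broken cone of P(L). Then β is exactly 2-dimensional, and its boundary consists of the origin together with two 1-dimensional cones, corresponding to vectors x ∈ L whose negative support equals supp_-(β) and whose positive support is one of the two connected components induced by supp_+(β). -/
open Matrix Set

variable {V : Type*} [Fintype V] [DecidableEq V]

/-- Positive support of a vector. -/
def posSupp (x : V → ℝ) : Set V := {v | 0 < x v}

/-- Negative support of a vector. -/
def negSupp (x : V → ℝ) : Set V := {v | x v < 0}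

/-- Support of a vector. -/
def supp (x : V → ℝ) : Set V := {v | x v ≠ 0}

/-- External neighborhood of a set of vertices. -/
def nbhd (G : SimpleGraph V) (S : Set V) : Set V := {v | v ∉ S ∧ ∃ u ∈ S, G.Adj u v}

/-- Number of connected components of the subgraph induced by `S`. -/
noncomputable def compCount (G : SimpleGraph V) (S : Set V) : ℕ :=
  Nat.card (G.induce S).ConnectedComponent

/-- `C` is (the vertex set of) a connected component of the subgraph induced by `S`. -/
def IsComponentOf (G : SimpleGraph V) (S C : Set V) : Prop :=
  ∃ K : (G.induce S).ConnectedComponent, C = Subtype.val '' K.supp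

/-- `M ∈ M(G)`: a real symmetric matrix with exactly one negative eigenvalue
(counted with multiplicity), negative entries on edges and zero off-diagonal
entries on non-edges. -/
structure CdVMatrix (G : SimpleGraph V) (M : Matrix V V ℝ) : Prop where
  herm : M.IsHermitian
  edge_neg : ∀ u v, G.Adj u v → M u v < 0
  nonedge_zero : ∀ u v, u ≠ v → ¬ G.Adj u v → M u v = 0
  one_neg : {i | herm.eigenvalues i < 0}.ncard = 1

/-- Semivalid representation of a graph: conditions (i)-(iv). -/
def Semivalid (G : SimpleGraph V) (L : Submodule ℝ (V → ℝ)) : Prop :=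
  ∀ x ∈ L, x ≠ 0 →
    ((posSupp x).Nonempty ∧ (negSupp x).Nonempty) ∧
    ((G.induce (posSupp x)).Connected ∨
      (compCount G (posSupp x) = 2 ∧ (G.induce (negSupp x)).Connected)) ∧
    ((∀ y ∈ L, y ≠ 0 → supp y ⊆ supp x → supp y = supp x) →
      (G.induce (posSupp x)).Connected ∧ (G.induce (negSupp x)).Connected) ∧
    (¬ (G.induce (posSupp x)).Connected →
      (∀ u ∈ posSupp x, ∀ v ∈ negSupp x, ¬ G.Adj u v) ∧
      (∀ C : Set V, IsComponentOf G (supp x) C → nbhd G C = nbhd G (supp x)))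

/-- The sign-pattern cone of `x` in `L` (a relatively open cone of the fan `P(L)`). -/
def signCone (L : Submodule ℝ (V → ℝ)) (x : V → ℝ) : Set (V → ℝ) :=
  {y | y ∈ L ∧ posSupp y = posSupp x ∧ negSupp y = negSupp x}

/-- The dimension of the cone of `x`, i.e. the dimension of its linear span. -/
noncomputable def coneDim (L : Submodule ℝ (V → ℝ)) (x : V → ℝ) : ℕ :=
  Module.finrank ℝ (Submodule.span ℝ (signCone L x))

/-- The graph parameter η: maximal dimension of a semivalid representation. -/
noncomputable def etaParam (G : SimpleGraph V) : ℕ :=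
  sSup {n | ∃ L : Submodule ℝ (V → ℝ), Semivalid G L ∧ Module.finrank ℝ L = n}

/-- Valid representation of a graph. -/
def Valid (G : SimpleGraph V) (X : Submodule ℝ (V → ℝ)) : Prop :=
  ∀ x ∈ X, x ≠ 0 → (G.induce (posSupp x)).Connected

/-- The graph parameter λ: maximal dimension of a valid representation. -/
noncomputable def lambdaParam (G : SimpleGraph V) : ℕ :=
  sSup {n | ∃ X : Submodule ℝ (V → ℝ), Valid G X ∧ Module.finrank ℝ X = n}

/-- The Strong Arnold hypothesis. -/
def SAH (G : SimpleGraph V) (M : Matrix V V ℝ) : Prop :=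
  ∀ X : Matrix V V ℝ, X.IsSymm → (∀ u v, (u = v ∨ G.Adj u v) → X u v = 0) →
    M * X = 0 → X = 0

/-- The Colin de Verdière parameter μ. -/
noncomputable def muParam (G : SimpleGraph V) : ℕ :=
  sSup {n | ∃ M : Matrix V V ℝ, CdVMatrix G M ∧ SAH G M ∧
    Module.finrank ℝ (LinearMap.ker M.mulVecLin) = n}

/-!
Write `P` and `N` for the positive and negative supports of `y`. Semivalidity of `L` at `y` says
that `G[P]` has exactly two components `C₁`, `C₂`, that `G[N]` is connected, and that no edge
joins `P` to `N`. The heart of the proof is that every nonzero vector `z` of the closed cone of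
`y` outside the open cone has the sign pattern `(C₁, N)` or `(C₂, N)`: for large `t` the vector
`y - t • z` of `L` has the signs of `-z` on `supp z` and those of `y` elsewhere, and semivalidity
applied to it (and, when its positive support is connected, the neighbourhood condition applied to
`z`) leaves no other possibility.

Given this, subtracting from `y` the largest multiple of a vector `w` of `L` supported in `supp y`
that keeps it in the closed cone produces a new zero, hence a boundary vector; if `w` vanished at a
vertex of `C₁` and one of `C₂`, this boundary vector would be positive on both. So the vectors of
`L` supported in `supp y`, which span the cone, are determined by two values, and they form a plane
because `y` is not of minimal support. The same evaluation argument shows that each boundary ray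
spans a line.
-/

open Filter Topology

section Graph

omit [Fintype V] [DecidableEq V]

variable {G : SimpleGraph V} {S A B U : Set V}

lemma subset_or_subset_of_induce_connected (hS : (G.induce S).Connected) (hAB : S ⊆ A ∪ B)
    (hno : ∀ a ∈ A, ∀ b ∈ B, ¬ G.Adj a b) : S ⊆ A ∨ S ⊆ B := by
  by_contra! h
  obtain ⟨a, haS, haA⟩ := not_subset.1 h.1
  obtain ⟨b, hbS, hbB⟩ := not_subset.1 h.2
  obtain ⟨p⟩ := hS.preconnected ⟨b, hbS⟩ ⟨a, haS⟩
  obtain ⟨d, -, hd₁, hd₂⟩ :=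
    p.exists_boundary_dart {v | v.1 ∈ A} ((hAB hbS).resolve_right hbB) haA
  exact hno _ hd₁ _ ((hAB d.snd.2).resolve_left hd₂) d.adj

lemma isComponentOf_of_induce_connected (hSU : S ⊆ U) (hS : (G.induce S).Connected)
    (hclosed : ∀ a ∈ S, ∀ b ∈ U, G.Adj a b → b ∈ S) : IsComponentOf G U S := by
  obtain ⟨⟨s, hs⟩⟩ := hS.nonempty
  refine ⟨(G.induce U).connectedComponentMk ⟨s, hSU hs⟩, Set.ext fun v => ⟨fun hv => ?_, ?_⟩⟩
  · exact ⟨⟨v, hSU hv⟩, SimpleGraph.ConnectedComponent.sound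
      ((hS.preconnected ⟨v, hv⟩ ⟨s, hs⟩).map (G.induceHomOfLE hSU).toHom), rfl⟩
  · rintro ⟨⟨v, hvU⟩, hv, rfl⟩
    by_contra hvS
    obtain ⟨p⟩ := SimpleGraph.ConnectedComponent.exact hv
    obtain ⟨d, -, hd₁, hd₂⟩ := p.reverse.exists_boundary_dart {w | w.1 ∈ S} hs hvS
    exact hd₂ (hclosed _ hd₁ _ d.snd.2 d.adj)

lemma connected_induce_image_supp (K : (G.induce S).ConnectedComponent) :
    (G.induce (Subtype.val '' K.supp)).Connected :=
  K.connected_toSimpleGraph.map ⟨fun v => ⟨v.1.1, mem_image_of_mem _ v.2⟩, fun h => h⟩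
    (by rintro ⟨_, v, hv, rfl⟩; exact ⟨⟨v, hv⟩, rfl⟩)

lemma eq_or_eq_of_subset_union {X C₁ C₂ : Set V} (hX : X ⊆ C₁ ∪ C₂) (hne : X.Nonempty)
    (hXne : X ≠ C₁ ∪ C₂) (h₁ : C₁ ⊆ X ∨ Disjoint C₁ X) (h₂ : C₂ ⊆ X ∨ Disjoint C₂ X) :
    X = C₁ ∨ X = C₂ := by
  rcases h₁ with h₁ | h₁ <;> rcases h₂ with h₂ | h₂
  · exact absurd (hX.antisymm (union_subset h₁ h₂)) hXne
  · exact Or.inl (Subset.antisymm (fun v hv => (hX hv).resolve_right (disjoint_right.1 h₂ hv)) h₁)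
  · exact Or.inr (Subset.antisymm (fun v hv => (hX hv).resolve_left (disjoint_right.1 h₁ hv)) h₂)
  · obtain ⟨v, hv⟩ := hne
    rcases hX hv with h | h
    · exact absurd hv (disjoint_left.1 h₁ h)
    · exact absurd hv (disjoint_left.1 h₂ h)

end Graph

section SignPattern

omit [Fintype V] [DecidableEq V]

lemma disjoint_posSupp_negSupp (y : V → ℝ) : Disjoint (posSupp y) (negSupp y) :=
  disjoint_left.2 fun _ (h : 0 < y _) h' => lt_asymm h h'

lemma ne_zero_of_mem_posSupp {y : V → ℝ} {v : V} (hv : v ∈ posSupp y) : y ≠ 0 := by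
  rintro rfl
  exact lt_irrefl (0 : ℝ) hv

lemma supp_eq_union (y : V → ℝ) : supp y = posSupp y ∪ negSupp y :=
  Set.ext fun _ => ne_iff_lt_or_gt.trans or_comm

def closedSignCone (L : Submodule ℝ (V → ℝ)) (y : V → ℝ) : Set (V → ℝ) :=
  {z | z ∈ L ∧ posSupp z ⊆ posSupp y ∧ negSupp z ⊆ negSupp y}

def suppSubspace (L : Submodule ℝ (V → ℝ)) (y : V → ℝ) : Submodule ℝ (V → ℝ) where
  carrier := {z | z ∈ L ∧ ∀ v, y v = 0 → z v = 0}
  add_mem' hz hw := ⟨L.add_mem hz.1 hw.1, fun v hv => by simp [hz.2 v hv, hw.2 v hv]⟩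
  zero_mem' := ⟨L.zero_mem, fun _ _ => rfl⟩
  smul_mem' c _ hz := ⟨L.smul_mem c hz.1, fun v hv => by simp [hz.2 v hv]⟩

variable {L : Submodule ℝ (V → ℝ)} {x y z : V → ℝ} {v : V}

lemma posSupp_eq_and_negSupp_eq_of_mul_pos (h : ∀ v, y v ≠ 0 → 0 < x v * y v)
    (h0 : ∀ v, y v = 0 → x v = 0) : posSupp x = posSupp y ∧ negSupp x = negSupp y := by
  refine ⟨Set.ext fun v => ?_, Set.ext fun v => ?_⟩ <;> by_cases hv : y v = 0
  · simp [posSupp, hv, h0 v hv]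
  · exact pos_iff_pos_of_mul_pos (h v hv)
  · simp [negSupp, hv, h0 v hv]
  · exact neg_iff_neg_of_mul_pos (h v hv)

lemma supp_eq_of_mem_signCone (hx : x ∈ signCone L y) : supp x = supp y := by
  rw [supp_eq_union, supp_eq_union, hx.2.1, hx.2.2]

lemma signCone_subset_closedSignCone : signCone L y ⊆ closedSignCone L y :=
  fun _ hx => ⟨hx.1, hx.2.1.le, hx.2.2.le⟩

lemma apply_eq_zero_of_mem_closedSignCone (hz : z ∈ closedSignCone L y) (hv : y v = 0) :
    z v = 0 := by
  by_contra h
  rcases Ne.lt_or_gt h with h | h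
  · exact (hz.2.2 h).ne hv
  · exact (hz.2.1 h).ne' hv

lemma mul_nonneg_of_mem_closedSignCone (hz : z ∈ closedSignCone L y) (v : V) :
    0 ≤ z v * y v := by
  rcases lt_trichotomy (z v) 0 with h | h | h
  · exact (mul_pos_of_neg_of_neg h (hz.2.2 h)).le
  · simp [h]
  · exact (mul_pos h (hz.2.1 h)).le

lemma mem_closedSignCone_of_mul_nonneg (hx : x ∈ L) (h : ∀ v, 0 ≤ x v * y v)
    (h0 : ∀ v, y v = 0 → x v = 0) : x ∈ closedSignCone L y := by
  refine ⟨hx, fun v hv => ?_, fun v hv => ?_⟩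
  · exact (nonneg_of_mul_nonneg_right (h v) hv).lt_of_ne fun h' => hv.ne' (h0 v h'.symm)
  · exact (nonpos_of_mul_nonneg_right (h v) hv).lt_of_ne fun h' => hv.ne (h0 v h')

lemma mem_posSupp_of_mem_closedSignCone (hz : z ∈ closedSignCone L y) (hv : v ∈ posSupp y)
    (hzv : z v ≠ 0) : v ∈ posSupp z :=
  hzv.lt_or_gt.resolve_left fun h => disjoint_left.1 (disjoint_posSupp_negSupp y) hv (hz.2.2 h)

lemma mem_negSupp_of_mem_closedSignCone (hz : z ∈ closedSignCone L y) (hv : v ∈ negSupp y)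
    (hzv : z v ≠ 0) : v ∈ negSupp z :=
  hzv.lt_or_gt.resolve_right fun h => disjoint_left.1 (disjoint_posSupp_negSupp y) (hz.2.1 h) hv

end SignPattern

section FiniteSignPattern

omit [DecidableEq V]

variable {L : Submodule ℝ (V → ℝ)} {y z w : V → ℝ}

lemma exists_forall_mul_lt_mul_sq (a b : V → ℝ) :
    ∃ t : ℝ, ∀ v, b v ≠ 0 → a v * b v < t * b v ^ 2 :=
  (eventually_all.2 fun v => (eventually_gt_atTop (a v * b v / b v ^ 2)).mono
    fun _ ht (hb : b v ≠ 0) => (div_lt_iff₀ (sq_pos_iff.2 hb)).1 ht).exists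

lemma exists_posSupp_negSupp_sub_smul (y z : V → ℝ) : ∃ t : ℝ,
    posSupp (y - t • z) = negSupp z ∪ (posSupp y \ supp z) ∧
    negSupp (y - t • z) = posSupp z ∪ (negSupp y \ supp z) := by
  obtain ⟨t, ht⟩ := exists_forall_mul_lt_mul_sq y z
  refine ⟨t, Set.ext fun v => ?_, Set.ext fun v => ?_⟩ <;> by_cases hv : z v = 0
  · simp [posSupp, negSupp, supp, hv]
  · have : (y v - t * z v) * z v < 0 := by nlinarith [ht v hv]
    simpa [posSupp, negSupp, supp, hv] using pos_iff_neg_of_mul_neg this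
  · simp [posSupp, negSupp, supp, hv]
  · have : (y v - t * z v) * z v < 0 := by nlinarith [ht v hv]
    simpa [posSupp, negSupp, supp, hv] using neg_iff_pos_of_mul_neg this

lemma isClosed_closedSignCone : IsClosed (closedSignCone L y) := by
  simp only [closedSignCone, posSupp, negSupp, ofPred_subset_ofPred, ofPred_and, ofPred_forall]
  refine L.closed_of_finiteDimensional.inter
    ((isClosed_iInter fun v => ?_).inter (isClosed_iInter fun v => ?_))
  · exact isClosed_imp (isOpen_lt continuous_const (continuous_apply v)) isClosed_const
  · exact isClosed_imp (isOpen_lt (continuous_apply v) continuous_const) isClosed_const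

lemma closure_signCone (hy : y ∈ L) : closure (signCone L y) = closedSignCone L y := by
  refine (closure_minimal signCone_subset_closedSignCone isClosed_closedSignCone).antisymm
    fun z hz => ?_
  have hlim : Tendsto (fun ε : ℝ => z + ε • y) (𝓝[>] 0) (𝓝 z) := by
    have : Continuous fun ε : ℝ => z + ε • y := by fun_prop
    simpa using (this.tendsto 0).mono_left nhdsWithin_le_nhds
  refine mem_closure_of_tendsto hlim (eventually_mem_nhdsWithin.mono fun ε (hε : 0 < ε) =>
    ⟨L.add_mem hz.1 (L.smul_mem ε hy), posSupp_eq_and_negSupp_eq_of_mul_pos (fun v hv => ?_)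
      (fun v hv => by simp [hv, apply_eq_zero_of_mem_closedSignCone hz hv])⟩)
  have := mul_pos hε (mul_self_pos.2 hv)
  simp only [Pi.add_apply, Pi.smul_apply, smul_eq_mul]
  nlinarith [mul_nonneg_of_mem_closedSignCone hz v]

lemma span_signCone (hy : y ∈ L) : Submodule.span ℝ (signCone L y) = suppSubspace L y := by
  refine le_antisymm (Submodule.span_le.2 fun z hz => ⟨hz.1, fun v hv =>
    apply_eq_zero_of_mem_closedSignCone (signCone_subset_closedSignCone hz) hv⟩) fun z hz => ?_
  obtain ⟨t, ht⟩ := exists_forall_mul_lt_mul_sq (-z) y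
  simp only [Pi.neg_apply, neg_mul] at ht
  have hmem : z + t • y ∈ signCone L y :=
    ⟨L.add_mem hz.1 (L.smul_mem t hy), posSupp_eq_and_negSupp_eq_of_mul_pos
      (fun v hv => by simp only [Pi.add_apply, Pi.smul_apply, smul_eq_mul]; nlinarith [ht v hv])
      (fun v hv => by simp [hv, hz.2 v hv])⟩
  simpa using Submodule.sub_mem _ (Submodule.subset_span hmem)
    (Submodule.smul_mem _ t (Submodule.subset_span ⟨hy, rfl, rfl⟩))

lemma exists_sub_smul_mem_closedSignCone (hy : y ∈ L) (hw : w ∈ suppSubspace L y) (hw0 : w ≠ 0) :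
    ∃ t : ℝ, y - t • w ∈ closedSignCone L y ∧ ∃ v, y v ≠ 0 ∧ (y - t • w) v = 0 := by
  classical
  obtain ⟨v₀, hv₀⟩ := Function.ne_iff.1 hw0
  wlog hpos : 0 < y v₀ * w v₀ generalizing w
  · have hne : y v₀ * w v₀ ≠ 0 := mul_ne_zero (fun h => hv₀ (hw.2 _ h)) hv₀
    obtain ⟨t, ht⟩ := this (neg_mem hw) (neg_ne_zero.2 hw0) (by simpa using hv₀)
      (by simpa using (not_lt.1 hpos).lt_of_ne hne)
    exact ⟨-t, by simpa using ht⟩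
  obtain ⟨v₁, hv₁, hmin⟩ := Finset.exists_min_image {v | 0 < y v * w v} (fun v => y v / w v)
    ⟨v₀, by simpa using hpos⟩
  simp only [Finset.mem_filter, Finset.mem_univ, true_and] at hv₁ hmin
  have hwv₁ : w v₁ ≠ 0 := by rintro h; simp [h] at hv₁
  have ht : 0 < y v₁ / w v₁ := by
    rw [← mul_div_mul_right _ _ hwv₁]; exact div_pos hv₁ (mul_self_pos.2 hwv₁)
  refine ⟨y v₁ / w v₁, mem_closedSignCone_of_mul_nonneg (L.sub_mem hy (L.smul_mem _ hw.1))
    (fun v => ?_) (fun v hv => by simp [hv, hw.2 v hv]),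
    v₁, fun h => by simp [h] at hv₁, by simp [div_mul_cancel₀ _ hwv₁]⟩
  simp only [Pi.sub_apply, Pi.smul_apply, smul_eq_mul]
  rcases lt_or_ge 0 (y v * w v) with h | h
  · have hwv : w v ≠ 0 := by rintro h'; simp [h'] at h
    have key : y v / w v * (y v * w v) = y v * y v := by field_simp
    nlinarith [mul_le_mul_of_nonneg_right (hmin v h) h.le]
  · nlinarith [mul_self_nonneg (y v)]

end FiniteSignPattern

section BrokenCone

omit [Fintype V] [DecidableEq V]

structure IsBrokenSplit (G : SimpleGraph V) (y : V → ℝ) (C₁ C₂ : Set V) : Prop where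
  connected₁ : (G.induce C₁).Connected
  connected₂ : (G.induce C₂).Connected
  union_eq : C₁ ∪ C₂ = posSupp y
  disjoint : Disjoint C₁ C₂
  not_adj : ∀ a ∈ C₁, ∀ b ∈ C₂, ¬ G.Adj a b
  not_adj_negSupp : ∀ a ∈ posSupp y, ∀ b ∈ negSupp y, ¬ G.Adj a b
  connected_negSupp : (G.induce (negSupp y)).Connected

variable {G : SimpleGraph V} {L : Submodule ℝ (V → ℝ)} {y z : V → ℝ} {C₁ C₂ : Set V}

lemma exists_isBrokenSplit (hL : Semivalid G L) (hy : y ∈ L) (hy0 : y ≠ 0)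
    (hbroken : ¬ (G.induce (posSupp y)).Connected) :
    ∃ C₁ C₂, IsBrokenSplit G y C₁ C₂ ∧ ∀ S, IsComponentOf G (posSupp y) S ↔ S = C₁ ∨ S = C₂ := by
  obtain ⟨-, hy2, -, hy4⟩ := hL y hy hy0
  obtain ⟨hcard, hN⟩ := hy2.resolve_left hbroken
  obtain ⟨K₁, K₂, hK, hKuniv⟩ := Nat.card_eq_two_iff.1 hcard
  have hK' : ∀ K, K = K₁ ∨ K = K₂ := fun K => by
    have : K ∈ ({K₁, K₂} : Set _) := hKuniv ▸ mem_univ K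
    simpa using this
  refine ⟨_, _, ⟨connected_induce_image_supp K₁, connected_induce_image_supp K₂, ?_, ?_, ?_,
    (hy4 hbroken).1, hN⟩, fun S => ⟨?_, ?_⟩⟩
  · refine Set.ext fun v => ⟨?_, fun hv => ?_⟩
    · rintro (⟨w, -, rfl⟩ | ⟨w, -, rfl⟩) <;> exact w.2
    · rcases hK' ((G.induce _).connectedComponentMk ⟨v, hv⟩) with h | h
      exacts [Or.inl ⟨⟨v, hv⟩, h, rfl⟩, Or.inr ⟨⟨v, hv⟩, h, rfl⟩]
  · refine disjoint_left.2 ?_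
    rintro _ ⟨v, hv, rfl⟩ ⟨w, hw, hwv⟩
    obtain rfl : w = v := Subtype.ext hwv
    exact hK (hv.symm.trans hw)
  · rintro _ ⟨a, ha, rfl⟩ _ ⟨b, hb, rfl⟩ hab
    exact hK (ha.symm.trans
      ((SimpleGraph.ConnectedComponent.connectedComponentMk_eq_of_adj
        (show (G.induce (posSupp y)).Adj a b from hab)).trans hb))
  · rintro ⟨K, rfl⟩
    rcases hK' K with rfl | rfl
    exacts [Or.inl rfl, Or.inr rfl]
  · rintro (rfl | rfl)
    exacts [⟨K₁, rfl⟩, ⟨K₂, rfl⟩]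

lemma posSupp_eq_of_induce_connected (hno : ∀ a ∈ posSupp y, ∀ b ∈ negSupp y, ¬ G.Adj a b)
    (hz : z ∈ closedSignCone L y) (hNz : (negSupp z).Nonempty)
    (hconn : (G.induce (negSupp z ∪ (posSupp y \ supp z))).Connected) :
    posSupp z = posSupp y := by
  obtain ⟨m, hm⟩ := hNz
  have hPN := disjoint_posSupp_negSupp y
  rcases subset_or_subset_of_induce_connected hconn
    (union_subset (hz.2.2.trans subset_union_right) (sdiff_subset.trans subset_union_left))
    hno with h | h
  · exact absurd (hz.2.2 hm) (disjoint_left.1 hPN (h (Or.inl hm)))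
  · refine hz.2.1.antisymm fun v hv => ?_
    by_cases hzv : z v = 0
    · exact absurd (h (Or.inr ⟨hv, not_not.2 hzv⟩)) (disjoint_left.1 hPN hv)
    · exact mem_posSupp_of_mem_closedSignCone hz hv hzv

namespace IsBrokenSplit

variable (hs : IsBrokenSplit G y C₁ C₂)
include hs

lemma symm : IsBrokenSplit G y C₂ C₁ where
  connected₁ := hs.connected₂
  connected₂ := hs.connected₁
  union_eq := union_comm C₂ C₁ ▸ hs.union_eq
  disjoint := hs.disjoint.symm
  not_adj a ha b hb hab := hs.not_adj b hb a ha hab.symm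
  not_adj_negSupp := hs.not_adj_negSupp
  connected_negSupp := hs.connected_negSupp

lemma nonempty : C₁.Nonempty := nonempty_coe_sort.1 hs.connected₁.nonempty

lemma ssubset_posSupp : C₁ ⊂ posSupp y := by
  obtain ⟨v, hv⟩ := hs.symm.nonempty
  exact (ssubset_iff_of_subset (hs.union_eq ▸ subset_union_left)).2
    ⟨v, hs.union_eq ▸ Or.inr hv, disjoint_right.1 hs.disjoint hv⟩

lemma not_connected : ¬ (G.induce (posSupp y)).Connected := fun h => by
  obtain ⟨u, hu⟩ := hs.nonempty
  obtain ⟨v, hv⟩ := hs.symm.nonempty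
  rcases subset_or_subset_of_induce_connected h hs.union_eq.symm.subset hs.not_adj with h | h
  · exact disjoint_right.1 hs.disjoint hv (h (hs.symm.ssubset_posSupp.subset hv))
  · exact disjoint_left.1 hs.disjoint hu (h (hs.ssubset_posSupp.subset hu))

lemma false_of_posSupp_eq (hL : Semivalid G L) (hz : z ∈ closedSignCone L y)
    (hzβ : z ∉ signCone L y) (hz0 : z ≠ 0) (hP : posSupp z = posSupp y) : False := by
  have hbroken : ¬ (G.induce (posSupp z)).Connected := hP ▸ hs.not_connected
  obtain ⟨⟨-, m, hm⟩, hz2, -, hz4⟩ := hL z hz.1 hz0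
  have hnbhd := (hz4 hbroken).2
  have hsupp : supp z = posSupp y ∪ negSupp z := by rw [supp_eq_union, hP]
  have hNcomp : IsComponentOf G (supp z) (negSupp z) :=
    isComponentOf_of_induce_connected (hsupp ▸ subset_union_right)
      (hz2.resolve_left hbroken).2 fun a ha b hb hab =>
        (hsupp ▸ hb).resolve_left fun hb' => hs.not_adj_negSupp b hb' a (hz.2.2 ha) hab.symm
  have hC₁comp : IsComponentOf G (supp z) C₁ := by
    refine isComponentOf_of_induce_connected
      (hsupp ▸ hs.ssubset_posSupp.subset.trans subset_union_left) hs.connected₁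
      fun a ha b hb hab => ?_
    rcases hsupp ▸ hb with hb | hb
    · exact ((hs.union_eq ▸ hb : b ∈ C₁ ∪ C₂)).resolve_right fun hb' => hs.not_adj a ha b hb' hab
    · exact absurd hab (hs.not_adj_negSupp a (hs.ssubset_posSupp.subset ha) b (hz.2.2 hb))
  have hno : ∀ a ∈ negSupp z, ∀ b ∈ negSupp y \ negSupp z, ¬ G.Adj a b := by
    intro a ha b hb hab
    have hb' : b ∈ nbhd G C₁ := by
      rw [hnbhd _ hC₁comp, ← hnbhd _ hNcomp]
      exact ⟨hb.2, a, ha, hab⟩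
    obtain ⟨-, c, hc, hcb⟩ := hb'
    exact hs.not_adj_negSupp c (hs.ssubset_posSupp.subset hc) b hb.1 hcb
  rcases subset_or_subset_of_induce_connected hs.connected_negSupp
    (union_sdiff_cancel hz.2.2).symm.subset hno with h | h
  · exact hzβ ⟨hz.1, hP, hz.2.2.antisymm h⟩
  · exact (h (hz.2.2 hm)).2 hm

lemma pattern_of_not_adj (hz : z ∈ closedSignCone L y) (hzβ : z ∉ signCone L y)
    (hPz : (posSupp z).Nonempty) (hNz : (negSupp z).Nonempty)
    (hno : ∀ a ∈ negSupp z ∪ (posSupp y \ supp z), ∀ b ∈ posSupp z ∪ (negSupp y \ supp z),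
      ¬ G.Adj a b) :
    negSupp z = negSupp y ∧ (posSupp z = C₁ ∨ posSupp z = C₂) := by
  have hPN := disjoint_posSupp_negSupp y
  have hPNz := disjoint_posSupp_negSupp z
  have hcover : posSupp y ∪ negSupp y ⊆
      (negSupp z ∪ (posSupp y \ supp z)) ∪ (posSupp z ∪ (negSupp y \ supp z)) := by
    rintro v hv
    by_cases hzv : z v = 0
    · rcases hv with hv | hv
      · exact Or.inl (Or.inr ⟨hv, not_not.2 hzv⟩)
      · exact Or.inr (Or.inr ⟨hv, not_not.2 hzv⟩)
    · rcases hv with hv | hv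
      · exact Or.inr (Or.inl (mem_posSupp_of_mem_closedSignCone hz hv hzv))
      · exact Or.inl (Or.inl (mem_negSupp_of_mem_closedSignCone hz hv hzv))
  have hN : negSupp z = negSupp y := by
    obtain ⟨m, hm⟩ := hNz
    rcases subset_or_subset_of_induce_connected hs.connected_negSupp
      (subset_union_right.trans hcover) hno with h | h
    · refine hz.2.2.antisymm fun v hv => (h hv).resolve_right fun h' => ?_
      exact disjoint_left.1 hPN h'.1 hv
    · rcases h (hz.2.2 hm) with h | h
      · exact absurd hm (disjoint_left.1 hPNz h)
      · exact absurd hm.ne h.2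
  have hC : ∀ C ⊆ posSupp y, (G.induce C).Connected → C ⊆ posSupp z ∨ Disjoint C (posSupp z) := by
    intro C hCP hC
    rcases subset_or_subset_of_induce_connected hC
      ((hCP.trans subset_union_left).trans hcover) hno with h | h
    · refine Or.inr (disjoint_left.2 fun v hv hv' => ?_)
      rcases h hv with h | h
      · exact disjoint_left.1 hPNz hv' h
      · exact h.2 hv'.ne'
    · refine Or.inl fun v hv => (h hv).resolve_right fun h' => ?_
      exact disjoint_left.1 hPN (hCP hv) h'.1
  refine ⟨hN, eq_or_eq_of_subset_union (hs.union_eq ▸ hz.2.1) hPz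
    (fun h => hzβ ⟨hz.1, h.trans hs.union_eq, hN⟩)
    (hC _ hs.ssubset_posSupp.subset hs.connected₁)
    (hC _ hs.symm.ssubset_posSupp.subset hs.connected₂)⟩

end IsBrokenSplit

end BrokenCone

namespace IsBrokenSplit

omit [DecidableEq V]

variable {G : SimpleGraph V} {L : Submodule ℝ (V → ℝ)} {x y z w : V → ℝ} {C₁ C₂ : Set V}
variable (hs : IsBrokenSplit G y C₁ C₂)
include hs

lemma pattern_of_mem_closedSignCone (hL : Semivalid G L) (hy : y ∈ L)
    (hz : z ∈ closedSignCone L y) (hzβ : z ∉ signCone L y) (hz0 : z ≠ 0) :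
    negSupp z = negSupp y ∧ (posSupp z = C₁ ∨ posSupp z = C₂) := by
  obtain ⟨⟨hPz, hNz⟩, -⟩ := hL z hz.1 hz0
  obtain ⟨t, hPx, hNx⟩ := exists_posSupp_negSupp_sub_smul y z
  have hxL : y - t • z ∈ L := L.sub_mem hy (L.smul_mem t hz.1)
  have hx0 : y - t • z ≠ 0 := ne_zero_of_mem_posSupp (v := hNz.some) (hPx ▸ Or.inl hNz.some_mem)
  by_cases hconn : (G.induce (posSupp (y - t • z))).Connected
  · rw [hPx] at hconn
    exact (hs.false_of_posSupp_eq hL hz hzβ hz0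
      (posSupp_eq_of_induce_connected hs.not_adj_negSupp hz hNz hconn)).elim
  · have hno := ((hL _ hxL hx0).2.2.2 hconn).1
    rw [hPx, hNx] at hno
    exact hs.pattern_of_not_adj hz hzβ hPz hNz hno

lemma eq_zero_of_apply_eq_zero (hL : Semivalid G L) (hy : y ∈ L) {u₁ u₂ : V} (hu₁ : u₁ ∈ C₁)
    (hu₂ : u₂ ∈ C₂) (hw : w ∈ suppSubspace L y) (hw₁ : w u₁ = 0) (hw₂ : w u₂ = 0) : w = 0 := by
  by_contra hw0
  obtain ⟨t, hg, v, hyv, hgv⟩ := exists_sub_smul_mem_closedSignCone hy hw hw0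
  have hpos : ∀ {u}, u ∈ C₁ ∪ C₂ → w u = 0 → u ∈ posSupp (y - t • w) := fun hu hwu => by
    simpa [posSupp, hwu] using (hs.union_eq ▸ hu : _ ∈ posSupp y)
  have hu₁' := hpos (Or.inl hu₁) hw₁
  have hu₂' := hpos (Or.inr hu₂) hw₂
  have hgβ : y - t • w ∉ signCone L y := fun h =>
    ((supp_eq_of_mem_signCone h).symm ▸ hyv : v ∈ supp (y - t • w)) hgv
  rcases (hs.pattern_of_mem_closedSignCone hL hy hg hgβ (ne_zero_of_mem_posSupp hu₁')).2 with h | h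
  · exact disjoint_left.1 hs.disjoint (h ▸ hu₂') hu₂
  · exact disjoint_left.1 hs.disjoint hu₁ (h ▸ hu₁')

lemma finrank_suppSubspace (hL : Semivalid G L) (hy : y ∈ L) :
    Module.finrank ℝ (suppSubspace L y) = 2 := by
  obtain ⟨u₁, hu₁⟩ := hs.nonempty
  obtain ⟨u₂, hu₂⟩ := hs.symm.nonempty
  have hy0 : y ≠ 0 := ne_zero_of_mem_posSupp (hs.ssubset_posSupp.subset hu₁)
  obtain ⟨z, hzL, hz0, hzy, hzy'⟩ : ∃ z ∈ L, z ≠ 0 ∧ supp z ⊆ supp y ∧ supp z ≠ supp y := by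
    by_contra! h
    exact hs.not_connected ((hL y hy hy0).2.2.1 h).1
  apply le_antisymm
  · let f := ((LinearMap.proj u₁).prod (LinearMap.proj u₂)).comp (suppSubspace L y).subtype
    refine (LinearMap.finrank_le_finrank_of_injective (f := f) ?_).trans (by simp)
    refine (injective_iff_map_eq_zero f).2 fun w hw => Subtype.ext ?_
    exact hs.eq_zero_of_apply_eq_zero hL hy hu₁ hu₂ w.2 (congrArg Prod.fst hw)
      (congrArg Prod.snd hw)
  · obtain ⟨v, hv, hzv⟩ := not_subset.1 fun h => hzy' (hzy.antisymm h)
    have hli : LinearIndependent ℝ ![y, z] := LinearIndependent.pair_iff.2 fun a b hab => by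
      have ha : a = 0 := by
        simpa [not_not.1 hzv, show y v ≠ 0 from hv] using congrFun hab v
      subst ha
      simpa [hz0] using hab
    have hymem : y ∈ suppSubspace L y := ⟨hy, fun _ h => h⟩
    have hzmem : z ∈ suppSubspace L y := ⟨hzL, fun v hv => not_not.1 fun h => hzy h hv⟩
    calc 2 = Module.finrank ℝ (Submodule.span ℝ (range ![y, z])) := by
          rw [finrank_span_eq_card hli, Fintype.card_fin]
      _ ≤ _ := Submodule.finrank_mono (Submodule.span_le.2 (range_subset_iff.2
          (Fin.forall_fin_two.2 ⟨hymem, hzmem⟩)))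

lemma finrank_suppSubspace_of_posSupp_eq (hL : Semivalid G L) (hy : y ∈ L) (hx : x ∈ L)
    (hxn : negSupp x = negSupp y) (hxp : posSupp x = C₁) :
    Module.finrank ℝ (suppSubspace L x) = 1 := by
  obtain ⟨u₁, hu₁⟩ := hs.nonempty
  obtain ⟨u₂, hu₂⟩ := hs.symm.nonempty
  have hxu₁ : 0 < x u₁ := (hxp.symm ▸ hu₁ : u₁ ∈ posSupp x)
  have hxu₂ : x u₂ = 0 := by
    refine not_not.1 fun h => ?_
    rcases (supp_eq_union x ▸ h : u₂ ∈ posSupp x ∪ negSupp x) with h | h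
    · exact disjoint_right.1 hs.disjoint hu₂ (hxp ▸ h)
    · exact disjoint_left.1 (disjoint_posSupp_negSupp y)
        (hs.symm.ssubset_posSupp.subset hu₂) (hxn ▸ h)
  have hxy : x ∈ closedSignCone L y := ⟨hx, hxp ▸ hs.ssubset_posSupp.subset, hxn.le⟩
  have hmono : suppSubspace L x ≤ suppSubspace L y := fun w hw =>
    ⟨hw.1, fun v hv => hw.2 v (apply_eq_zero_of_mem_closedSignCone hxy hv)⟩
  have hxmem : x ∈ suppSubspace L x := ⟨hx, fun _ h => h⟩
  rw [finrank_eq_one_iff_of_nonzero' (⟨x, hxmem⟩ : suppSubspace L x)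
    (fun h => hxu₁.ne' (congrFun (congrArg Subtype.val h) u₁))]
  intro w
  refine ⟨w.1 u₁ / x u₁, Subtype.ext (Eq.symm (sub_eq_zero.1 ?_))⟩
  refine hs.eq_zero_of_apply_eq_zero hL hy hu₁ hu₂
    (hmono ((suppSubspace L x).sub_mem w.2 ((suppSubspace L x).smul_mem _ hxmem))) ?_ ?_
  · simp [div_mul_cancel₀ _ hxu₁.ne']
  · simp [hxu₂, w.2.2 u₂ hxu₂]

lemma closure_signCone_diff (hL : Semivalid G L) (hy : y ∈ L) :
    closure (signCone L y) \ signCone L y =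
      {0} ∪ {x | x ∈ L ∧ negSupp x = negSupp y ∧ (posSupp x = C₁ ∨ posSupp x = C₂)} := by
  rw [closure_signCone hy]
  ext x
  constructor
  · rintro ⟨hx, hxβ⟩
    by_cases hx0 : x = 0
    · exact Or.inl hx0
    · exact Or.inr ⟨hx.1, hs.pattern_of_mem_closedSignCone hL hy hx hxβ hx0⟩
  · rintro (rfl | ⟨hxL, hxn, hxp⟩)
    · refine ⟨⟨L.zero_mem, by simp [posSupp], by simp [negSupp]⟩, fun h => ?_⟩
      obtain ⟨v, hv⟩ := hs.nonempty
      exact ne_zero_of_mem_posSupp (h.2.1.symm ▸ hs.ssubset_posSupp.subset hv) rfl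
    · have hC : posSupp x ⊂ posSupp y := by
        rcases hxp with h | h <;> rw [h]
        exacts [hs.ssubset_posSupp, hs.symm.ssubset_posSupp]
      exact ⟨⟨hxL, hC.subset, hxn.le⟩, fun h => hC.ne h.2.1⟩

end IsBrokenSplit

theorem stmt4_general (G : SimpleGraph V) (L : Submodule ℝ (V → ℝ))
    (hL : Semivalid G L) (y : V → ℝ) (hy : y ∈ L) (hy0 : y ≠ 0)
    (hbroken : ¬ (G.induce (posSupp y)).Connected) :
    coneDim L y = 2 ∧
    compCount G (posSupp y) = 2 ∧
    closure (signCone L y) \ signCone L y =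
      {0} ∪ {x | x ∈ L ∧ negSupp x = negSupp y ∧
        ∃ K : (G.induce (posSupp y)).ConnectedComponent,
          posSupp x = Subtype.val '' K.supp} ∧
    (∀ x ∈ closure (signCone L y) \ signCone L y, x ≠ 0 → coneDim L x = 1) := by
  obtain ⟨C₁, C₂, hs, hcomp⟩ := exists_isBrokenSplit hL hy hy0 hbroken
  have hcomp' : ∀ x : V → ℝ, (∃ K : (G.induce (posSupp y)).ConnectedComponent,
      posSupp x = Subtype.val '' K.supp) ↔ posSupp x = C₁ ∨ posSupp x = C₂ :=
    fun x => hcomp (posSupp x)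
  have hbdry := hs.closure_signCone_diff hL hy
  simp only [hcomp']
  refine ⟨?_, ((hL y hy hy0).2.1.resolve_left hbroken).1, hbdry, fun x hx hx0 => ?_⟩
  · rw [coneDim, span_signCone hy, hs.finrank_suppSubspace hL hy]
  · rw [hbdry] at hx
    rcases hx with hx | ⟨hxL, hxn, hxp | hxp⟩
    · exact absurd hx hx0
    · rw [coneDim, span_signCone hxL, hs.finrank_suppSubspace_of_posSupp_eq hL hy hxL hxn hxp]
    · rw [coneDim, span_signCone hxL,
        hs.symm.finrank_suppSubspace_of_posSupp_eq hL hy hxL hxn hxp]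

/-- a broken cone `β = signCone L y` is exactly 2-dimensional, `G[supp₊(β)]`
has exactly two connected components, and the boundary of `β` consists of the origin
together with the (1-dimensional) cones of vectors whose negative support equals
`supp₋(β)` and whose positive support is one of the two components of `G[supp₊(β)]`. -/
theorem stmt4 (G : SimpleGraph V) (hG : G.Connected) (L : Submodule ℝ (V → ℝ))
    (hL : Semivalid G L) (y : V → ℝ) (hy : y ∈ L) (hy0 : y ≠ 0)
    (hbroken : ¬ (G.induce (posSupp y)).Connected) :
    coneDim L y = 2 ∧
    compCount G (posSupp y) = 2 ∧
    closure (signCone L y) \ signCone L y =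
      {0} ∪ {x | x ∈ L ∧ negSupp x = negSupp y ∧
        ∃ K : (G.induce (posSupp y)).ConnectedComponent,
          posSupp x = Subtype.val '' K.supp} ∧
    (∀ x ∈ closure (signCone L y) \ signCone L y, x ≠ 0 → coneDim L x = 1) :=
  stmt4_general G L hL y hy hy0 hbroken
end

section
/- Let L be a semivalid representation of a connected graph G and α a 1-dimensional cone of the fan P(L). Then there is at most one broken cone β ∈ P(L) whose closure contains α. -/
open Matrix Set

variable {V : Type*} [Fintype V] [DecidableEq V]

/-!
If `x ≠ 0` lies in the closure of the cone of a broken `y`, then `supp₊ x ⊆ supp₊ y` and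
`supp₋ x ⊆ supp₋ y`, and `x` agrees with `y` on one side: otherwise, as the two sides of `y` are
not adjacent, both sign supports of `-x + ε y` (small `ε > 0`) would be disconnected. For broken
`y₁, y₂` this leaves three cases. If `y₁, y₂` share a side, `y₁ - ε y₂` violates condition (ii)
or (iv) unless they also share the other side. In the mixed case `x` is itself broken, and (iv),
applied to components shared by `supp x` and `supp yᵢ`, gives
`N(supp x) = N(supp y₁) = N(supp y₂)`. So no vertex of `supp yᵢ \ supp x` is adjacent to
`supp x`, which forces `supp₋ y₁ = supp₋ y₂` by connectivity of `supp₋ y₁`, and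
`supp₊ y₁ = supp₊ y₂` because `G[supp₊ y₂]` has only two components.
-/

open Filter Topology

section SignSupports

variable {α : Type*}

lemma supp_eq_posSupp_union_negSupp (x : α → ℝ) : supp x = posSupp x ∪ negSupp x := by
  ext v
  simp only [supp, posSupp, negSupp, Set.mem_ofPred_eq, Set.mem_union]
  exact ne_iff_lt_or_gt.trans or_comm

lemma posSupp_subset_supp (x : α → ℝ) : posSupp x ⊆ supp x :=
  fun _ h => ne_of_gt h

lemma negSupp_subset_supp (x : α → ℝ) : negSupp x ⊆ supp x :=
  fun _ h => ne_of_lt h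

lemma disjoint_posSupp_negSupp_s6 (x : α → ℝ) : Disjoint (posSupp x) (negSupp x) :=
  Set.disjoint_left.mpr fun _ (hp : 0 < x _) (hn : x _ < 0) => lt_asymm hp hn

lemma posSupp_neg (x : α → ℝ) : posSupp (-x) = negSupp x := by
  ext v; simp [posSupp, negSupp]

lemma negSupp_neg (x : α → ℝ) : negSupp (-x) = posSupp x := by
  ext v; simp [posSupp, negSupp]

lemma supp_neg (x : α → ℝ) : supp (-x) = supp x := by
  ext v; simp [supp]

lemma ne_zero_of_posSupp_nonempty {x : α → ℝ} (h : (posSupp x).Nonempty) : x ≠ 0 := by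
  rintro rfl
  simp [posSupp] at h

lemma diff_supp_eq_diff_posSupp {x : α → ℝ} {A : Set α} (h : Disjoint A (negSupp x)) :
    A \ supp x = A \ posSupp x := by
  rw [supp_eq_posSupp_union_negSupp, ← Set.sdiff_sdiff]
  exact (h.mono_left Set.sdiff_subset).sdiff_eq_left

lemma diff_supp_eq_diff_negSupp {x : α → ℝ} {A : Set α} (h : Disjoint A (posSupp x)) :
    A \ supp x = A \ negSupp x := by
  rw [supp_eq_posSupp_union_negSupp, Set.union_comm, ← Set.sdiff_sdiff]
  exact (h.mono_left Set.sdiff_subset).sdiff_eq_left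

lemma eventually_sign_add_mul (a b : ℝ) :
    ∀ᶠ ε in 𝓝[>] (0 : ℝ), (0 < a + ε * b ↔ 0 < a ∨ 0 < b ∧ a = 0) ∧
      (a + ε * b < 0 ↔ a < 0 ∨ b < 0 ∧ a = 0) := by
  have hlim : Tendsto (fun ε : ℝ => a + ε * b) (𝓝[>] 0) (𝓝 a) :=
    ((continuous_const.add (continuous_id.mul continuous_const)).tendsto' 0 a
      (by simp)).mono_left nhdsWithin_le_nhds
  rcases lt_trichotomy a 0 with ha | rfl | ha
  · filter_upwards [hlim.eventually (gt_mem_nhds ha)] with ε hε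
    simp [ha, ha.ne, hε, hε.not_gt, ha.not_gt]
  · filter_upwards [self_mem_nhdsWithin] with ε (hε : 0 < ε)
    have hneg : ε * b < 0 ↔ b < 0 := by
      rw [← neg_pos, ← mul_neg, mul_pos_iff_of_pos_left hε, neg_pos]
    simp [mul_pos_iff_of_pos_left hε, hneg]
  · filter_upwards [hlim.eventually (lt_mem_nhds ha)] with ε hε
    simp [ha, ha.ne', hε, hε.not_gt, ha.not_gt]

lemma exists_posSupp_negSupp_add_smul [Finite α] (a b : α → ℝ) :
    ∃ ε : ℝ, posSupp (a + ε • b) = posSupp a ∪ (posSupp b \ supp a) ∧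
      negSupp (a + ε • b) = negSupp a ∪ (negSupp b \ supp a) := by
  obtain ⟨ε, hε⟩ := (eventually_all.mpr fun v => eventually_sign_add_mul (a v) (b v)).exists
  refine ⟨ε, ?_, ?_⟩ <;> ext v <;> simp [posSupp, negSupp, supp, (hε v).1, (hε v).2]

lemma posSupp_subset_and_negSupp_subset_of_mem_closure_signCone
    {L : Submodule ℝ (α → ℝ)} {x y : α → ℝ} (hx : x ∈ closure (signCone L y)) :
    posSupp x ⊆ posSupp y ∧ negSupp x ⊆ negSupp y := by
  constructor
  · intro v hxv
    by_contra hyv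
    have hcl : closure (signCone L y) ⊆ {z | z v ≤ 0} :=
      closure_minimal (fun z ⟨_, hz, _⟩ => show z v ≤ 0 from not_lt.mp (hz ▸ hyv : v ∉ posSupp z))
        (isClosed_le (continuous_apply v) continuous_const)
    exact (show x v ≤ 0 from hcl hx).not_gt hxv
  · intro v hxv
    by_contra hyv
    have hcl : closure (signCone L y) ⊆ {z | 0 ≤ z v} :=
      closure_minimal (fun z ⟨_, _, hz⟩ => show 0 ≤ z v from not_lt.mp (hz ▸ hyv : v ∉ negSupp z))
        (isClosed_le continuous_const (continuous_apply v))
    exact (show 0 ≤ x v from hcl hx).not_gt hxv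

end SignSupports

section Graphs

variable {α : Type*} {G : SimpleGraph α}

lemma exists_adj_of_reachable_induce {S P : Set α} {u v : S}
    (h : (G.induce S).Reachable u v) (hu : (u : α) ∈ P) (hv : (v : α) ∉ P) :
    ∃ a ∈ S ∩ P, ∃ b ∈ S \ P, G.Adj a b := by
  obtain ⟨w⟩ := h
  obtain ⟨d, -, hd₁, hd₂⟩ := w.exists_boundary_dart {z | (z : α) ∈ P} hu hv
  exact ⟨d.fst, ⟨d.fst.2, hd₁⟩, d.snd, ⟨d.snd.2, hd₂⟩, d.adj⟩

lemma mem_of_reachable_induce {S P : Set α} {u v : S}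
    (hP : ∀ a ∈ S ∩ P, ∀ b ∈ S \ P, ¬ G.Adj a b)
    (h : (G.induce S).Reachable u v) (hu : (u : α) ∈ P) : (v : α) ∈ P := by
  by_contra hv
  obtain ⟨a, ha, b, hb, hab⟩ := exists_adj_of_reachable_induce h hu hv
  exact hP a ha b hb hab

lemma exists_adj_of_induce_connected {S P : Set α} (hS : (G.induce S).Connected)
    (hin : (S ∩ P).Nonempty) (hout : (S \ P).Nonempty) :
    ∃ a ∈ S ∩ P, ∃ b ∈ S \ P, G.Adj a b := by
  obtain ⟨p, hpS, hpP⟩ := hin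
  obtain ⟨q, hqS, hqP⟩ := hout
  exact exists_adj_of_reachable_induce (hS.preconnected ⟨p, hpS⟩ ⟨q, hqS⟩) hpP hqP

lemma not_connected_induce_union {P Q : Set α} (hP : P.Nonempty) (hQ : Q.Nonempty)
    (hPQ : Disjoint P Q) (hadj : ∀ a ∈ P, ∀ b ∈ Q, ¬ G.Adj a b) :
    ¬ (G.induce (P ∪ Q)).Connected := by
  intro h
  obtain ⟨a, ⟨-, ha⟩, b, ⟨hb, hbP⟩, hab⟩ := exists_adj_of_induce_connected (P := P) h
    (hP.mono fun _ hp => ⟨Or.inl hp, hp⟩)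
    (hQ.mono fun _ hq => ⟨Or.inr hq, Set.disjoint_right.mp hPQ hq⟩)
  exact hadj a ha b (hb.resolve_left hbP) hab

lemma compCount_ne_two_of_not_connected {P S : Set α} (hPS : P ⊆ S) (hP : P.Nonempty)
    (hPc : ¬ (G.induce P).Connected) (hSP : (S \ P).Nonempty)
    (hcl : ∀ a ∈ P, ∀ b ∈ S \ P, ¬ G.Adj a b) : compCount G S ≠ 2 := by
  have hPS' : ∀ a ∈ S ∩ P, ∀ b ∈ S \ P, ¬ G.Adj a b := fun a ha => hcl a ha.2
  obtain ⟨u, v, huv⟩ : ∃ u v : P, ¬ (G.induce P).Reachable u v := by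
    by_contra! h
    exact hPc ((SimpleGraph.connected_iff _).mpr ⟨h, hP.to_subtype⟩)
  set D : Set α := {w | ∃ hw : w ∈ P, (G.induce P).Reachable u ⟨w, hw⟩}
  have hD : ∀ a ∈ S ∩ D, ∀ b ∈ S \ D, ¬ G.Adj a b := by
    rintro a ⟨-, haP, hua⟩ b ⟨hbS, hbD⟩ hab
    by_cases hbP : b ∈ P
    · exact hbD ⟨hbP, hua.trans (SimpleGraph.Adj.reachable hab)⟩
    · exact hcl a haP b ⟨hbS, hbP⟩ hab
  obtain ⟨q, hqS, hqP⟩ := hSP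
  let c : S → (G.induce S).ConnectedComponent := (G.induce S).connectedComponentMk
  have huv' : c ⟨u, hPS u.2⟩ ≠ c ⟨v, hPS v.2⟩ := fun h =>
    (mem_of_reachable_induce (P := D) hD (SimpleGraph.ConnectedComponent.eq.mp h)
      ⟨u.2, .rfl⟩).elim fun _ h => huv h
  have huq : c ⟨u, hPS u.2⟩ ≠ c ⟨q, hqS⟩ := fun h =>
    hqP (mem_of_reachable_induce hPS' (SimpleGraph.ConnectedComponent.eq.mp h) u.2)
  have hvq : c ⟨v, hPS v.2⟩ ≠ c ⟨q, hqS⟩ := fun h =>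
    hqP (mem_of_reachable_induce hPS' (SimpleGraph.ConnectedComponent.eq.mp h) v.2)
  intro h2
  have := Nat.finite_of_card_ne_zero (α := (G.induce S).ConnectedComponent)
    (by rw [← compCount, h2]; norm_num)
  have h3 := Set.ncard_le_ncard (Set.subset_univ {c ⟨u, hPS u.2⟩, c ⟨v, hPS v.2⟩, c ⟨q, hqS⟩})
  rw [Set.ncard_eq_three.mpr ⟨_, _, _, huv', huq, hvq, rfl⟩, Set.ncard_univ, ← compCount,
    h2] at h3
  omega

lemma isComponentOf_iff {S C : Set α} :
    IsComponentOf G S C ↔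
      C ⊆ S ∧ (G.induce C).Connected ∧ ∀ a ∈ C, ∀ b ∈ S \ C, ¬ G.Adj a b := by
  constructor
  · rintro ⟨K, rfl⟩
    refine ⟨Set.image_subset_iff.mpr fun w _ => w.2, ?_, ?_⟩
    · refine K.connected_toSimpleGraph.map ⟨fun w => ⟨w.1.1, w.1, w.2, rfl⟩, fun h => h⟩ ?_
      rintro ⟨_, w, hw, rfl⟩
      exact ⟨⟨w, hw⟩, rfl⟩
    · rintro _ ⟨a, ha, rfl⟩ b ⟨hbS, hbK⟩ hab
      exact hbK ⟨⟨b, hbS⟩, (K.mem_supp_congr_adj (v := a) (w := ⟨b, hbS⟩) hab).mp ha, rfl⟩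
  · rintro ⟨hCS, hC, hcl⟩
    obtain ⟨c, hc⟩ := hC.nonempty
    refine ⟨(G.induce S).connectedComponentMk ⟨c, hCS hc⟩, Set.Subset.antisymm ?_ ?_⟩
    · intro v hv
      refine ⟨⟨v, hCS hv⟩, SimpleGraph.ConnectedComponent.eq.mpr ?_, rfl⟩
      exact (hC.preconnected ⟨v, hv⟩ ⟨c, hc⟩).map (G.induceHomOfLE hCS).toHom
    · rintro _ ⟨w, hw, rfl⟩
      exact mem_of_reachable_induce (u := ⟨c, hCS hc⟩) (fun a ha => hcl a ha.2)
        (SimpleGraph.ConnectedComponent.eq.mp hw).symm hc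

lemma isComponentOf_self {S : Set α} (h : (G.induce S).Connected) : IsComponentOf G S S :=
  isComponentOf_iff.mpr ⟨subset_rfl, h, by simp⟩

lemma IsComponentOf.union_right {S T C : Set α} (h : IsComponentOf G S C)
    (hST : ∀ a ∈ S, ∀ b ∈ T, ¬ G.Adj a b) : IsComponentOf G (S ∪ T) C := by
  obtain ⟨hCS, hC, hcl⟩ := isComponentOf_iff.mp h
  refine isComponentOf_iff.mpr ⟨hCS.trans Set.subset_union_left, hC, ?_⟩
  rintro a ha b ⟨hbS | hbT, hbC⟩
  · exact hcl a ha b ⟨hbS, hbC⟩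
  · exact hST a (hCS ha) b hbT

lemma IsComponentOf.union_left {S T C : Set α} (h : IsComponentOf G T C)
    (hST : ∀ a ∈ S, ∀ b ∈ T, ¬ G.Adj a b) : IsComponentOf G (S ∪ T) C :=
  Set.union_comm T S ▸ h.union_right fun a ha b hb hab => hST b hb a ha hab.symm

lemma mem_of_adj_of_nbhd_eq {S T : Set α} (h : nbhd G S = nbhd G T) {a b : α} (ha : a ∈ S)
    (hab : G.Adj a b) (hb : b ∈ T) : b ∈ S := by
  by_contra hbS
  have hbT : b ∈ nbhd G T := h ▸ ⟨hbS, a, ha, hab⟩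
  exact hbT.1 hb

end Graphs

namespace Semivalid

variable {α : Type*} {G : SimpleGraph α} {L : Submodule ℝ (α → ℝ)} (hL : Semivalid G L)
  {x y y₁ y₂ : α → ℝ}
include hL

section Basic

variable (hy : y ∈ L) (hy0 : y ≠ 0)
include hy hy0

lemma posSupp_nonempty : (posSupp y).Nonempty := (hL y hy hy0).1.1

lemma negSupp_nonempty : (negSupp y).Nonempty := (hL y hy hy0).1.2

lemma connected_posSupp_or_connected_negSupp :
    (G.induce (posSupp y)).Connected ∨ (G.induce (negSupp y)).Connected :=
  (hL y hy hy0).2.1.imp_right (·.2)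

variable (hb : ¬ (G.induce (posSupp y)).Connected)
include hb

lemma compCount_posSupp_eq_two : compCount G (posSupp y) = 2 :=
  ((hL y hy hy0).2.1.resolve_left hb).1

lemma connected_negSupp : (G.induce (negSupp y)).Connected :=
  ((hL y hy hy0).2.1.resolve_left hb).2

lemma not_adj_posSupp_negSupp : ∀ a ∈ posSupp y, ∀ b ∈ negSupp y, ¬ G.Adj a b :=
  ((hL y hy hy0).2.2.2 hb).1

lemma nbhd_eq_of_isComponentOf {C : Set α} (hC : IsComponentOf G (supp y) C) :
    nbhd G C = nbhd G (supp y) :=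
  ((hL y hy hy0).2.2.2 hb).2 C hC

end Basic

section Perturbation

variable [Finite α]

lemma posSupp_eq_or_negSupp_eq (hx : x ∈ L) (hx0 : x ≠ 0) (hy : y ∈ L) (hy0 : y ≠ 0)
    (hb : ¬ (G.induce (posSupp y)).Connected)
    (hP : posSupp x ⊆ posSupp y) (hN : negSupp x ⊆ negSupp y) :
    posSupp x = posSupp y ∨ negSupp x = negSupp y := by
  by_contra! hne
  have hno := hL.not_adj_posSupp_negSupp hy hy0 hb
  have hA : (posSupp y \ supp x).Nonempty := by
    rw [diff_supp_eq_diff_posSupp ((disjoint_posSupp_negSupp_s6 y).mono_right hN)]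
    exact Set.sdiff_nonempty.mpr fun h => hne.1 (hP.antisymm h)
  have hB : (negSupp y \ supp x).Nonempty := by
    rw [diff_supp_eq_diff_negSupp ((disjoint_posSupp_negSupp_s6 y).symm.mono_right hP)]
    exact Set.sdiff_nonempty.mpr fun h => hne.2 (hN.antisymm h)
  obtain ⟨ε, hzp, hzn⟩ := exists_posSupp_negSupp_add_smul (-x) y
  rw [posSupp_neg, supp_neg] at hzp
  rw [negSupp_neg, supp_neg] at hzn
  have hz : -x + ε • y ∈ L := L.add_mem (L.neg_mem hx) (L.smul_mem ε hy)
  have hz0 : -x + ε • y ≠ 0 :=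
    ne_zero_of_posSupp_nonempty (hzp ▸ (hL.negSupp_nonempty hx hx0).inl)
  rcases hL.connected_posSupp_or_connected_negSupp hz hz0 with h | h
  · rw [hzp] at h
    exact not_connected_induce_union (hL.negSupp_nonempty hx hx0) hA
      (disjoint_sdiff_right.mono_left (negSupp_subset_supp x))
      (fun a ha b hb hab => hno b hb.1 a (hN ha) hab.symm) h
  · rw [hzn] at h
    exact not_connected_induce_union (hL.posSupp_nonempty hx hx0) hB
      (disjoint_sdiff_right.mono_left (posSupp_subset_supp x))
      (fun a ha b hb => hno a (hP ha) b hb.1) h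

lemma posSupp_subset_of_negSupp_eq (hy₁ : y₁ ∈ L) (hy₁0 : y₁ ≠ 0) (hy₂ : y₂ ∈ L)
    (hy₂0 : y₂ ≠ 0) (hb₁ : ¬ (G.induce (posSupp y₁)).Connected)
    (hb₂ : ¬ (G.induce (posSupp y₂)).Connected) (hN : negSupp y₁ = negSupp y₂) :
    posSupp y₂ ⊆ posSupp y₁ := by
  by_contra hne
  have hno₂ := hL.not_adj_posSupp_negSupp hy₂ hy₂0 hb₂
  obtain ⟨ε, hwp, hwn⟩ := exists_posSupp_negSupp_add_smul y₁ (-y₂)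
  rw [posSupp_neg, ← hN, Set.sdiff_eq_empty.mpr (negSupp_subset_supp y₁), Set.union_empty]
    at hwp
  rw [negSupp_neg, diff_supp_eq_diff_posSupp (hN ▸ disjoint_posSupp_negSupp_s6 y₂)] at hwn
  have hw : y₁ + ε • -y₂ ∈ L := L.add_mem hy₁ (L.smul_mem ε (L.neg_mem hy₂))
  have hw0 : y₁ + ε • -y₂ ≠ 0 := ne_zero_of_posSupp_nonempty (hwp ▸ hL.posSupp_nonempty hy₁ hy₁0)
  rcases hL.connected_posSupp_or_connected_negSupp hw hw0 with h | h
  · exact hb₁ (hwp ▸ h)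
  · rw [hwn] at h
    exact not_connected_induce_union (hL.negSupp_nonempty hy₁ hy₁0) (Set.sdiff_nonempty.mpr hne)
      ((hN ▸ (disjoint_posSupp_negSupp_s6 y₂).symm).mono_right Set.sdiff_subset)
      (fun a ha b hb hab => hno₂ b hb.1 a (hN ▸ ha) hab.symm) h

lemma posSupp_eq_of_negSupp_eq (hy₁ : y₁ ∈ L) (hy₁0 : y₁ ≠ 0) (hy₂ : y₂ ∈ L) (hy₂0 : y₂ ≠ 0)
    (hb₁ : ¬ (G.induce (posSupp y₁)).Connected) (hb₂ : ¬ (G.induce (posSupp y₂)).Connected)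
    (hN : negSupp y₁ = negSupp y₂) : posSupp y₁ = posSupp y₂ :=
  (hL.posSupp_subset_of_negSupp_eq hy₂ hy₂0 hy₁ hy₁0 hb₂ hb₁ hN.symm).antisymm
    (hL.posSupp_subset_of_negSupp_eq hy₁ hy₁0 hy₂ hy₂0 hb₁ hb₂ hN)

lemma negSupp_subset_of_posSupp_eq (hy₁ : y₁ ∈ L) (hy₁0 : y₁ ≠ 0) (hy₂ : y₂ ∈ L)
    (hy₂0 : y₂ ≠ 0) (hb₂ : ¬ (G.induce (posSupp y₂)).Connected)
    (hP : posSupp y₁ = posSupp y₂) (hmeet : (negSupp y₁ ∩ negSupp y₂).Nonempty) :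
    negSupp y₂ ⊆ negSupp y₁ := by
  by_contra hne
  have hno₂ := hL.not_adj_posSupp_negSupp hy₂ hy₂0 hb₂
  obtain ⟨ε, hwp, hwn⟩ := exists_posSupp_negSupp_add_smul y₁ (-y₂)
  rw [negSupp_neg, ← hP, Set.sdiff_eq_empty.mpr (posSupp_subset_supp y₁), Set.union_empty]
    at hwn
  rw [posSupp_neg, diff_supp_eq_diff_negSupp (hP ▸ (disjoint_posSupp_negSupp_s6 y₂).symm)] at hwp
  have hw : y₁ + ε • -y₂ ∈ L := L.add_mem hy₁ (L.smul_mem ε (L.neg_mem hy₂))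
  have hw0 : y₁ + ε • -y₂ ≠ 0 :=
    ne_zero_of_posSupp_nonempty (hwp ▸ (hL.posSupp_nonempty hy₁ hy₁0).inl)
  have hbw : ¬ (G.induce (posSupp (y₁ + ε • -y₂))).Connected := by
    rw [hwp]
    exact not_connected_induce_union (hL.posSupp_nonempty hy₁ hy₁0) (Set.sdiff_nonempty.mpr hne)
      ((hP ▸ disjoint_posSupp_negSupp_s6 y₂).mono_right Set.sdiff_subset)
      (fun a ha b hb => hno₂ a (hP ▸ ha) b hb.1)
  obtain ⟨a, ha, b, hb, hab⟩ := exists_adj_of_induce_connected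
    (hL.connected_negSupp hy₂ hy₂0 hb₂) (Set.inter_comm _ _ ▸ hmeet) (Set.sdiff_nonempty.mpr hne)
  exact hL.not_adj_posSupp_negSupp hw hw0 hbw b (hwp ▸ Or.inr hb) a (hwn ▸ ha.2) hab.symm

lemma negSupp_eq_of_posSupp_eq (hy₁ : y₁ ∈ L) (hy₁0 : y₁ ≠ 0) (hy₂ : y₂ ∈ L) (hy₂0 : y₂ ≠ 0)
    (hb₁ : ¬ (G.induce (posSupp y₁)).Connected) (hb₂ : ¬ (G.induce (posSupp y₂)).Connected)
    (hP : posSupp y₁ = posSupp y₂) (hmeet : (negSupp y₁ ∩ negSupp y₂).Nonempty) :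
    negSupp y₁ = negSupp y₂ :=
  (hL.negSupp_subset_of_posSupp_eq hy₂ hy₂0 hy₁ hy₁0 hb₁ hP.symm
    (Set.inter_comm _ _ ▸ hmeet)).antisymm
      (hL.negSupp_subset_of_posSupp_eq hy₁ hy₁0 hy₂ hy₂0 hb₂ hP hmeet)

end Perturbation

lemma nbhd_supp_eq_of_isComponentOf (hy₁ : y₁ ∈ L) (hy₁0 : y₁ ≠ 0) (hy₂ : y₂ ∈ L)
    (hy₂0 : y₂ ≠ 0) (hb₁ : ¬ (G.induce (posSupp y₁)).Connected)
    (hb₂ : ¬ (G.induce (posSupp y₂)).Connected) {C : Set α}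
    (hC₁ : IsComponentOf G (supp y₁) C) (hC₂ : IsComponentOf G (supp y₂) C) :
    nbhd G (supp y₁) = nbhd G (supp y₂) :=
  (hL.nbhd_eq_of_isComponentOf hy₁ hy₁0 hb₁ hC₁).symm.trans
    (hL.nbhd_eq_of_isComponentOf hy₂ hy₂0 hb₂ hC₂)

section Mixed

variable (hx : x ∈ L) (hx0 : x ≠ 0) (hy₁ : y₁ ∈ L) (hy₁0 : y₁ ≠ 0) (hy₂ : y₂ ∈ L)
  (hy₂0 : y₂ ≠ 0) (hb₁ : ¬ (G.induce (posSupp y₁)).Connected)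
  (hb₂ : ¬ (G.induce (posSupp y₂)).Connected)
  (hPx : posSupp x = posSupp y₁) (hNx : negSupp x = negSupp y₂)
  (hP : posSupp y₁ ⊆ posSupp y₂)
include hx hx0 hy₁ hy₁0 hy₂ hy₂0 hb₁ hb₂ hPx hNx hP

lemma nbhd_supp_eq_of_mixed :
    nbhd G (supp x) = nbhd G (supp y₁) ∧ nbhd G (supp x) = nbhd G (supp y₂) := by
  have hbx : ¬ (G.induce (posSupp x)).Connected := hPx ▸ hb₁
  have hsx : supp x = posSupp y₁ ∪ negSupp y₂ := by
    rw [supp_eq_posSupp_union_negSupp, hPx, hNx]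
  have hno₁ := hL.not_adj_posSupp_negSupp hy₁ hy₁0 hb₁
  have hno₂ := hL.not_adj_posSupp_negSupp hy₂ hy₂0 hb₂
  have hno : ∀ a ∈ posSupp y₁, ∀ b ∈ negSupp y₂, ¬ G.Adj a b :=
    fun a ha => hno₂ a (hP ha)
  obtain ⟨a, ha⟩ := hL.posSupp_nonempty hy₁ hy₁0
  obtain ⟨C, hC⟩ : ∃ C, IsComponentOf G (posSupp y₁) C :=
    ⟨_, (G.induce _).connectedComponentMk ⟨a, ha⟩, rfl⟩
  have hB₂ := isComponentOf_self (hL.connected_negSupp hy₂ hy₂0 hb₂)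
  refine ⟨hL.nbhd_supp_eq_of_isComponentOf hx hx0 hy₁ hy₁0 hbx hb₁ (C := C) ?_ ?_,
    hL.nbhd_supp_eq_of_isComponentOf hx hx0 hy₂ hy₂0 hbx hb₂ (C := negSupp y₂) ?_ ?_⟩
  · rw [hsx]; exact hC.union_right hno
  · rw [supp_eq_posSupp_union_negSupp]; exact hC.union_right hno₁
  · rw [hsx]; exact hB₂.union_left hno
  · rw [supp_eq_posSupp_union_negSupp]; exact hB₂.union_left hno₂

lemma posSupp_eq_and_negSupp_eq_of_mixed (hN : negSupp y₂ ⊆ negSupp y₁) :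
    posSupp y₁ = posSupp y₂ ∧ negSupp y₁ = negSupp y₂ := by
  obtain ⟨hxy₁, hxy₂⟩ := hL.nbhd_supp_eq_of_mixed hx hx0 hy₁ hy₁0 hy₂ hy₂0 hb₁ hb₂ hPx hNx hP
  have hsx : supp x = posSupp y₁ ∪ negSupp y₂ := by
    rw [supp_eq_posSupp_union_negSupp, hPx, hNx]
  constructor
  · -- No edge leaves `supp₊ y₁` inside `supp₊ y₂`, so `G[supp₊ y₂]` would have `≥ 3` components.
    refine hP.antisymm (not_not.mp fun hne => compCount_ne_two_of_not_connected hP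
      (hL.posSupp_nonempty hy₁ hy₁0) hb₁ (Set.sdiff_nonempty.mpr hne) ?_
      (hL.compCount_posSupp_eq_two hy₂ hy₂0 hb₂))
    intro a ha b ⟨hb, hby₁⟩ hab
    have hbx := mem_of_adj_of_nbhd_eq hxy₂ (hsx ▸ Or.inl ha) hab (posSupp_subset_supp y₂ hb)
    rw [hsx] at hbx
    exact hbx.elim hby₁ (Set.disjoint_left.mp (disjoint_posSupp_negSupp_s6 y₂) hb)
  · refine (hN.antisymm (not_not.mp fun hne => ?_)).symm
    obtain ⟨a, ⟨-, ha⟩, b, ⟨hb, hby₂⟩, hab⟩ := exists_adj_of_induce_connected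
      (hL.connected_negSupp hy₁ hy₁0 hb₁)
      ((hL.negSupp_nonempty hy₂ hy₂0).mono fun _ h => ⟨hN h, h⟩) (Set.sdiff_nonempty.mpr hne)
    have hbx := mem_of_adj_of_nbhd_eq hxy₁ (hsx ▸ Or.inr ha) hab (negSupp_subset_supp y₁ hb)
    rw [hsx] at hbx
    exact hbx.elim (Set.disjoint_right.mp (disjoint_posSupp_negSupp_s6 y₁) hb) hby₂

end Mixed

end Semivalid

theorem stmt6_general (G : SimpleGraph V) (L : Submodule ℝ (V → ℝ))
    (hL : Semivalid G L) (x : V → ℝ) (hx : x ∈ L) (hx0 : x ≠ 0)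
    (y₁ y₂ : V → ℝ) (hy₁ : y₁ ∈ L) (hy₁0 : y₁ ≠ 0) (hy₂ : y₂ ∈ L) (hy₂0 : y₂ ≠ 0)
    (hb₁ : ¬ (G.induce (posSupp y₁)).Connected)
    (hb₂ : ¬ (G.induce (posSupp y₂)).Connected)
    (hc₁ : signCone L x ⊆ closure (signCone L y₁))
    (hc₂ : signCone L x ⊆ closure (signCone L y₂)) :
    signCone L y₁ = signCone L y₂ := by
  obtain ⟨hP₁, hN₁⟩ := posSupp_subset_and_negSupp_subset_of_mem_closure_signCone
    (hc₁ ⟨hx, rfl, rfl⟩)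
  obtain ⟨hP₂, hN₂⟩ := posSupp_subset_and_negSupp_subset_of_mem_closure_signCone
    (hc₂ ⟨hx, rfl, rfl⟩)
  suffices h : posSupp y₁ = posSupp y₂ ∧ negSupp y₁ = negSupp y₂ by
    simp only [signCone, h.1, h.2]
  rcases hL.posSupp_eq_or_negSupp_eq hx hx0 hy₁ hy₁0 hb₁ hP₁ hN₁ with hA₁ | hB₁ <;>
    rcases hL.posSupp_eq_or_negSupp_eq hx hx0 hy₂ hy₂0 hb₂ hP₂ hN₂ with hA₂ | hB₂
  · have hA := hA₁.symm.trans hA₂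
    exact ⟨hA, hL.negSupp_eq_of_posSupp_eq hy₁ hy₁0 hy₂ hy₂0 hb₁ hb₂ hA
      ((hL.negSupp_nonempty hx hx0).mono (Set.subset_inter hN₁ hN₂))⟩
  · exact hL.posSupp_eq_and_negSupp_eq_of_mixed hx hx0 hy₁ hy₁0 hy₂ hy₂0 hb₁ hb₂ hA₁ hB₂
      (hA₁ ▸ hP₂) (hB₂ ▸ hN₁)
  · exact (hL.posSupp_eq_and_negSupp_eq_of_mixed hx hx0 hy₂ hy₂0 hy₁ hy₁0 hb₂ hb₁ hA₂ hB₁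
      (hA₂ ▸ hP₁) (hB₁ ▸ hN₂)).imp Eq.symm Eq.symm
  · have hB := hB₁.symm.trans hB₂
    exact ⟨hL.posSupp_eq_of_negSupp_eq hy₁ hy₁0 hy₂ hy₂0 hb₁ hb₂ hB, hB⟩

/-- a 1-dimensional cone of `P(L)` lies in the closure of at most one
broken cone. -/
theorem stmt6 (G : SimpleGraph V) (hG : G.Connected) (L : Submodule ℝ (V → ℝ))
    (hL : Semivalid G L) (x : V → ℝ) (hx : x ∈ L) (hx0 : x ≠ 0)
    (h1 : coneDim L x = 1)
    (y₁ y₂ : V → ℝ) (hy₁ : y₁ ∈ L) (hy₁0 : y₁ ≠ 0) (hy₂ : y₂ ∈ L) (hy₂0 : y₂ ≠ 0)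
    (hb₁ : ¬ (G.induce (posSupp y₁)).Connected)
    (hb₂ : ¬ (G.induce (posSupp y₂)).Connected)
    (hc₁ : signCone L x ⊆ closure (signCone L y₁))
    (hc₂ : signCone L x ⊆ closure (signCone L y₂)) :
    signCone L y₁ = signCone L y₂ :=
  stmt6_general G L hL x hx hx0 y₁ y₂ hy₁ hy₁0 hy₂ hy₂0 hb₁ hb₂ hc₁ hc₂
end
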